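/- Let U be an open set in ℝⁿ and let Φ be an interval function on U (a real-valued function on closed axis-parallel boxes contained in U that is additive over finite partitions of a box into boxes with pairwise disjoint interiors). Suppose that at every point x ∈ U the density D_Φ(x) exists and is finite, i.e. Φ(Q)/m(Q) converges to D_Φ(x) as boxes Q ⊂ U containing x have diameter tending to 0, and that D_Φ is locally Lebesgue integrable on U. Then Φ(Q) = ∫_Q D_Φ(x) dx for every box Q ⊂ U. -/

import Mathlib

open MeasureTheory

/-- A (nondegenerate) closed axis-parallel box in `ℝⁿ`. -/
def IsBox {n : ℕ} (Q : Set (Fin n → ℝ)) : Prop :=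
  ∃ a b : Fin n → ℝ, (∀ i, a i < b i) ∧ Q = Set.Icc a b

/-- A finite partition of a box into boxes with pairwise disjoint interiors. -/
def IsBoxPartition {n : ℕ} (Q : Set (Fin n → ℝ)) {m : ℕ}
    (P : Fin m → Set (Fin n → ℝ)) : Prop :=
  (∀ i, IsBox (P i)) ∧ (⋃ i, P i) = Q ∧
    Pairwise fun i j => Disjoint (interior (P i)) (interior (P j))

/-- An interval function on an open set `U`: a real-valued function on closed axis-parallel
boxes contained in `U` that is additive over finite partitions of a box into boxes with
pairwise disjoint interiors. -/
def IsIntervalFunction {n : ℕ} (U : Set (Fin n → ℝ)) (Φ : Set (Fin n → ℝ) → ℝ) : Prop :=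
  ∀ Q : Set (Fin n → ℝ), IsBox Q → Q ⊆ U →
    ∀ (m : ℕ) (P : Fin m → Set (Fin n → ℝ)), IsBoxPartition Q P →
      Φ Q = ∑ i, Φ (P i)

/-- The upper density of an interval function at a point:
`limsup_{x ∈ Q, δ(Q) → 0} Φ(Q)/m(Q) = inf_{ε>0} sup {Φ(Q)/m(Q) : x ∈ Q ⊆ U, δ(Q) ≤ ε}`,
with values in `[-∞, +∞]`. -/
noncomputable def upperDensity {n : ℕ} (U : Set (Fin n → ℝ)) (Φ : Set (Fin n → ℝ) → ℝ)
    (x : Fin n → ℝ) : EReal :=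
  ⨅ (ε : ℝ) (_ : 0 < ε),
    ⨆ (Q : Set (Fin n → ℝ)) (_ : IsBox Q ∧ x ∈ Q ∧ Q ⊆ U ∧ Metric.diam Q ≤ ε),
      ((Φ Q / (volume Q).toReal : ℝ) : EReal)

/-- The lower density of an interval function at a point:
`liminf_{x ∈ Q, δ(Q) → 0} Φ(Q)/m(Q) = sup_{ε>0} inf {Φ(Q)/m(Q) : x ∈ Q ⊆ U, δ(Q) ≤ ε}`,
with values in `[-∞, +∞]`. -/
noncomputable def lowerDensity {n : ℕ} (U : Set (Fin n → ℝ)) (Φ : Set (Fin n → ℝ) → ℝ)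
    (x : Fin n → ℝ) : EReal :=
  ⨆ (ε : ℝ) (_ : 0 < ε),
    ⨅ (Q : Set (Fin n → ℝ)) (_ : IsBox Q ∧ x ∈ Q ∧ Q ⊆ U ∧ Metric.diam Q ≤ ε),
      ((Φ Q / (volume Q).toReal : ℝ) : EReal)

/-- `Φ` has finite density `L` at `x` (relative to `U`): `Φ(Q)/m(Q) → L` as boxes
`Q ⊆ U` containing `x` have diameter tending to `0`. -/
def HasBoxDensityAt {n : ℕ} (U : Set (Fin n → ℝ)) (Φ : Set (Fin n → ℝ) → ℝ)
    (L : ℝ) (x : Fin n → ℝ) : Prop :=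
  ∀ ε > 0, ∃ τ > 0, ∀ Q : Set (Fin n → ℝ), IsBox Q → x ∈ Q → Q ⊆ U →
    Metric.diam Q ≤ τ → |Φ Q / (volume Q).toReal - L| ≤ ε

/-!
The density hypothesis says that for a box `J ∋ x` of small diameter, `Φ(J)` differs from
`m(J) · D(x)` by at most `ε · m(J)`. Summed over a fine tagged partition of `Q` with tags in
their boxes, and using the additivity of `Φ`, this makes every Henstock–Riemann sum of `D`
`ε · m(Q)`-close to `Φ(Q)`, so `Φ(Q)` is the Henstock integral of `D` over `Q`. A Lebesgue
integrable function is Henstock integrable with the same integral, and the Henstock integral is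
unique.
-/

open BoxIntegral Set Metric Filter Topology

namespace BoxIntegral

variable {ι : Type*}

theorem Box.closure_coe (I : Box ι) : closure (I : Set (ι → ℝ)) = Box.Icc I := by
  rw [Box.Icc_eq_pi, Box.coe_eq_pi, closure_pi_set]
  exact pi_congr rfl fun i _ => closure_Ioc (I.lower_lt_upper i).ne

theorem Box.interior_Icc [Finite ι] (I : Box ι) : interior (Box.Icc I) = Box.Ioo I := by
  rw [Box.Icc_eq_pi, interior_pi_set finite_univ]
  exact Set.pi_congr rfl fun i _ => _root_.interior_Icc

theorem Prepartition.IsPartition.biUnion_Icc [Finite ι] {I : Box ι} {π : Prepartition I}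
    (hπ : π.IsPartition) : ⋃ J ∈ π.boxes, Box.Icc J = Box.Icc I := by
  refine (iUnion₂_subset fun J hJ => Box.le_iff_Icc.1 (π.le_of_mem hJ)).antisymm ?_
  rw [← Box.closure_coe, ← hπ.iUnion_eq, π.iUnion_def]
  exact closure_minimal (iUnion₂_mono fun J _ => Box.coe_subset_Icc)
    (π.boxes.finite_toSet.isClosed_biUnion fun J _ => J.isCompact_Icc.isClosed)

end BoxIntegral

section IntervalFunction

variable {n : ℕ} {U : Set (Fin n → ℝ)} {Φ : Set (Fin n → ℝ) → ℝ}

theorem BoxIntegral.Box.isBox_Icc (I : Box (Fin n)) : IsBox (Box.Icc I) :=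
  ⟨I.lower, I.upper, I.lower_lt_upper, rfl⟩

theorem BoxIntegral.Prepartition.IsPartition.isBoxPartition_Icc {I : Box (Fin n)}
    {π : Prepartition I} (hπ : π.IsPartition) :
    IsBoxPartition (Box.Icc I) fun i => Box.Icc (π.boxes.equivFin.symm i : Box (Fin n)) := by
  set e := π.boxes.equivFin.symm
  refine ⟨fun i => Box.isBox_Icc _, ?_, fun i j hij => ?_⟩
  · rw [← hπ.biUnion_Icc, e.surjective.iUnion_comp fun J => Box.Icc (J : Box (Fin n)),
      iUnion_subtype]
  · have hne : (e i : Box (Fin n)) ≠ e j := fun h => hij (e.injective (Subtype.ext h))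
    show Disjoint (interior (Box.Icc _)) (interior (Box.Icc _))
    rw [Box.interior_Icc, Box.interior_Icc]
    exact (π.disjoint_coe_of_mem (e i).2 (e j).2 hne).mono (Box.Ioo_subset_coe _)
      (Box.Ioo_subset_coe _)

theorem IsIntervalFunction.sum_partition_boxes (hΦ : IsIntervalFunction U Φ) {I : Box (Fin n)}
    (hIU : Box.Icc I ⊆ U) {π : Prepartition I} (hπ : π.IsPartition) :
    ∑ J ∈ π.boxes, Φ (Box.Icc J) = Φ (Box.Icc I) := by
  rw [hΦ _ (Box.isBox_Icc I) hIU _ _ hπ.isBoxPartition_Icc, ← Finset.sum_coe_sort]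
  exact (π.boxes.equivFin.symm.sum_comp fun J => Φ (Box.Icc (J : Box (Fin n)))).symm

def IsIntervalFunction.toBoxAdditiveMap (hΦ : IsIntervalFunction U Φ) (I : Box (Fin n))
    (hIU : Box.Icc I ⊆ U) : Fin n →ᵇᵃ[I] ℝ where
  toFun J := Φ (Box.Icc J)
  sum_partition_boxes' _ hJ _ hπ :=
    hΦ.sum_partition_boxes ((Box.le_iff_Icc.1 (WithTop.coe_le_coe.1 hJ)).trans hIU) hπ

theorem BoxIntegral.Box.volume_Icc_toReal (I : Box (Fin n)) :
    (volume (Box.Icc I)).toReal = (volume : Measure (Fin n → ℝ)).toBoxAdditive I := by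
  rw [Measure.toBoxAdditive_apply, measureReal_def, measure_congr I.coe_ae_eq_Icc]

theorem BoxIntegral.Box.volume_toBoxAdditive_pos (I : Box (Fin n)) :
    0 < (volume : Measure (Fin n → ℝ)).toBoxAdditive I := by
  rw [Box.volume_apply]
  exact Finset.prod_pos fun i _ => sub_pos.2 (I.lower_lt_upper i)

theorem HasBoxDensityAt.exists_dist_le {L : ℝ} {x : Fin n → ℝ} (h : HasBoxDensityAt U Φ L x)
    (hU : U ∈ 𝓝 x) {ε : ℝ} (hε : 0 < ε) :
    ∃ δ > 0, ∀ J : Box (Fin n), Box.Icc J ⊆ closedBall x δ → x ∈ Box.Icc J →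
      dist ((volume : Measure (Fin n → ℝ)).toBoxAdditive J * L) (Φ (Box.Icc J)) ≤
        ε * (volume : Measure (Fin n → ℝ)).toBoxAdditive J := by
  obtain ⟨τ, hτ, hτQ⟩ := h ε hε
  obtain ⟨ρ, hρ, hρU⟩ := nhds_basis_closedBall.mem_iff.1 hU
  refine ⟨min ρ (τ / 2), lt_min hρ (half_pos hτ), fun J hJ hxJ => ?_⟩
  have hJU : Box.Icc J ⊆ U :=
    hJ.trans ((closedBall_subset_closedBall (min_le_left _ _)).trans hρU)
  have hdiam : diam (Box.Icc J) ≤ τ :=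
    calc diam (Box.Icc J) ≤ diam (closedBall x (min ρ (τ / 2))) :=
          diam_mono hJ isBounded_closedBall
      _ ≤ 2 * min ρ (τ / 2) := diam_closedBall (lt_min hρ (half_pos hτ)).le
      _ ≤ τ := by linarith [min_le_right ρ (τ / 2)]
  have hΦJ := hτQ _ (Box.isBox_Icc J) hxJ hJU hdiam
  set v := (volume : Measure (Fin n → ℝ)).toBoxAdditive J
  have hv : 0 < v := J.volume_toBoxAdditive_pos
  rw [J.volume_Icc_toReal] at hΦJ
  have hsplit : Φ (Box.Icc J) - v * L = (Φ (Box.Icc J) / v - L) * v := by field_simp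
  calc dist (v * L) (Φ (Box.Icc J)) = |Φ (Box.Icc J) / v - L| * v := by
        rw [dist_comm, Real.dist_eq, hsplit, abs_mul, abs_of_pos hv]
    _ ≤ ε * v := mul_le_mul_of_nonneg_right hΦJ hv.le

theorem IsIntervalFunction.hasIntegral_of_hasBoxDensityAt (hU : IsOpen U)
    (hΦ : IsIntervalFunction U Φ) {D : (Fin n → ℝ) → ℝ} {I : Box (Fin n)} (hIU : Box.Icc I ⊆ U)
    (hD : ∀ x ∈ Box.Icc I, HasBoxDensityAt U Φ (D x) x) :
    HasIntegral I IntegrationParams.Henstock D (volume : Measure (Fin n → ℝ)).toBoxAdditive.toSMul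
      (Φ (Box.Icc I)) := by
  -- Henstock partitions have their tags in their boxes, which the density hypothesis requires.
  refine HasIntegral.of_bRiemann_eq_false_of_forall_isLittleO rfl
    ((volume : Measure (Fin n → ℝ)).toBoxAdditive.restrict I le_top)
    (fun J => measureReal_nonneg) (hΦ.toBoxAdditiveMap I hIU) ∅ countable_empty
    (fun h => absurd h not_nonempty_empty) (fun _ x hx => absurd hx.2 (notMem_empty x))
    fun _ x hx ε hε => ?_
  obtain ⟨δ, hδ, hδJ⟩ := (hD x hx.1).exists_dist_le (hU.mem_nhds (hIU hx.1)) hε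
  exact ⟨δ, hδ, fun J _ hJ hxJ _ => hδJ J hJ (hxJ rfl)⟩

end IntervalFunction

/-- **Multidimensional fundamental theorem of calculus.** If an interval function Φ on an
open set `U ⊆ ℝⁿ` has a finite density `D_Φ(x) = D x` at every point of `U` (i.e.
`Φ(Q)/m(Q) → D x` as boxes `Q ⊆ U` containing `x` have diameter tending to `0`), and
`D` is locally Lebesgue integrable on `U`, then `Φ(Q) = ∫_Q D_Φ(x) dx` for every box
`Q ⊆ U`. -/
theorem intervalFunction_eq_integral_density {n : ℕ}
    (U : Set (Fin n → ℝ)) (hU : IsOpen U)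
    (Φ : Set (Fin n → ℝ) → ℝ) (hΦ : IsIntervalFunction U Φ)
    (D : (Fin n → ℝ) → ℝ)
    (hD : ∀ x ∈ U, HasBoxDensityAt U Φ (D x) x)
    (hloc : LocallyIntegrableOn D U volume) :
    ∀ Q : Set (Fin n → ℝ), IsBox Q → Q ⊆ U → Φ Q = ∫ x in Q, D x := by
  rintro Q ⟨a, b, hab, rfl⟩ hQU
  let I : Box (Fin n) := ⟨a, b, hab⟩
  have hD_int : IntegrableOn D (Box.Icc I) := hloc.integrableOn_compact_subset hQU isCompact_Icc
  calc Φ (Icc a b) = ∫ x in I, D x :=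
        (hΦ.hasIntegral_of_hasBoxDensityAt hU hQU fun x hx => hD x (hQU hx)).unique
          ((hD_int.mono_set Box.coe_subset_Icc).hasBoxIntegral _ rfl)
    _ = ∫ x in Icc a b, D x := setIntegral_congr_set I.coe_ae_eq_Icc
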